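/- Let h ∈ ℂ with h ∉ 2πi·ℚ, q := exp(h). Let ℓ ∈ ℂ and let m₀ ∈ ℂ satisfy q^{2m₀+k} ≠ −1 for all k ∈ ℤ. Then the generic Gelfand–Tsetlin representation V^ℓ_{m₀} has length at most 3: every strictly increasing chain 0 = U₀ ⊊ U₁ ⊊ ⋯ ⊊ U_n = V of ℂ-linear subspaces of V = ⊕_{k∈ℤ} ℂ·e_k, each invariant under both I₂₁ and I₃₂, has n ≤ 3. -/

import Mathlib

/-- `q^b := exp(h·b)`. -/
noncomputable def qpow (h b : ℂ) : ℂ := Complex.exp (h * b)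

/-- the q-number `[b] := (q^b − q^{−b})/(q − q^{−1})` where `q = exp h`. -/
noncomputable def qnum (h b : ℂ) : ℂ :=
  (Complex.exp (h * b) - Complex.exp (-(h * b))) / (Complex.exp h - Complex.exp (-h))

/-- The rationalized Gelfand–Tsetlin coefficient
`a_k = [ℓ+m₀+k+1][ℓ−m₀−k]/((q^{m₀+k}+q^{−(m₀+k)})(q^{m₀+k+1}+q^{−(m₀+k+1)}))`. -/
noncomputable def gtA (h ℓ m₀ : ℂ) (k : ℤ) : ℂ :=
  qnum h (ℓ + m₀ + k + 1) * qnum h (ℓ - m₀ - k) /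
    ((qpow h (m₀ + k) + qpow h (-(m₀ + k))) *
      (qpow h (m₀ + k + 1) + qpow h (-(m₀ + k + 1))))

/-!
Every $I_{21}$-invariant subspace is spanned by the basis vectors $e_k$ it contains: the
eigenvalues $i[m_0+k]$ of $I_{21}$ are pairwise distinct (this is where $q^{2m_0+k} \ne -1$
enters), so a Lagrange interpolation polynomial in $I_{21}$ isolates each component of a vector.
Since $I_{32} e_k = a_k e_{k+1} - e_{k-1}$, the index set of an invariant subspace is closed
under $k \mapsto k-1$, and under $k \mapsto k+1$ whenever $a_k \ne 0$. A proper nonzero invariant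
subspace is therefore spanned by $\{e_k : k \le N\}$ for some zero $N$ of $a$. As $q$ is not a
root of unity, each factor $[\ell+m_0+k+1]$, $[\ell-m_0-k]$ of the numerator of $a_k$ vanishes for
at most one $k$, so there are at most two proper nonzero invariant subspaces, and a strict chain
has length at most three.
-/

open Complex Finsupp Polynomial

section Diagonal

variable {ι K : Type*} [Field K] {T : Module.End K (ι →₀ K)} {μ : ι → K}
  {W : Submodule K (ι →₀ K)}

theorem apply_single_of_diagonal (hT : ∀ k, T (single k 1) = μ k • single k 1) (k : ι) (c : K) :
    T (single k c) = μ k • single k c := by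
  rw [← smul_single_one, map_smul, hT, smul_comm]

theorem single_one_mem_of_mem_support_of_diagonal (hμ : Function.Injective μ)
    (hT : ∀ k, T (single k 1) = μ k • single k 1) (hW : ∀ v ∈ W, T v ∈ W)
    {v : ι →₀ K} (hv : v ∈ W) {k : ι} (hk : k ∈ v.support) : single k 1 ∈ W := by
  classical
  set p : K[X] := ∏ j ∈ v.support.erase k, (X - C (μ j))
  have hp_single : ∀ m c, aeval T p (single m c) = p.eval (μ m) • single m c := fun m c =>
    Module.End.aeval_apply_of_mem_apply_eq_smul (apply_single_of_diagonal hT m c)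
  have hp_vanish : ∀ m ∈ v.support, m ≠ k → p.eval (μ m) = 0 := fun m hm hmk => by
    rw [eval_prod]
    exact Finset.prod_eq_zero (Finset.mem_erase.mpr ⟨hmk, hm⟩) (by simp)
  have hp_ne_zero : p.eval (μ k) ≠ 0 := by
    rw [eval_prod, Finset.prod_ne_zero_iff]
    intro j hj
    simpa [sub_eq_zero] using hμ.ne (Finset.ne_of_mem_erase hj).symm
  have hpv : aeval T p v = p.eval (μ k) • single k (v k) := by
    conv_lhs => rw [← v.sum_single]
    rw [map_finsuppSum, Finsupp.sum, Finset.sum_eq_single k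
      (fun m hm hmk => by rw [hp_single, hp_vanish m hm hmk, zero_smul]) (absurd hk), hp_single]
  have hmem : aeval T p v ∈ W := aeval_apply_smul_mem_of_le_comap hv p T hW
  rw [hpv, ← smul_single_one, smul_smul] at hmem
  exact (W.smul_mem_iff (mul_ne_zero hp_ne_zero (mem_support_iff.mp hk))).mp hmem

theorem eq_supported_of_diagonal (hμ : Function.Injective μ)
    (hT : ∀ k, T (single k 1) = μ k • single k 1) (hW : ∀ v ∈ W, T v ∈ W) :
    W = supported K K {k | single k 1 ∈ W} := by
  refine le_antisymm (fun v hv => (mem_supported K v).mpr fun k hk =>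
    single_one_mem_of_mem_support_of_diagonal hμ hT hW hv hk) ?_
  rw [supported_eq_span_single, Submodule.span_le]
  rintro _ ⟨k, hk, rfl⟩
  exact hk

end Diagonal

theorem sub_one_mem_and_add_one_mem_of_ladder {K : Type*} [Field K] {a : ℤ → K}
    {T : Module.End K (ℤ →₀ K)}
    (hT : ∀ k, T (single k 1) = a k • single (k + 1) 1 - single (k - 1) 1)
    {S : Set ℤ} (hS : ∀ v ∈ supported K K S, T v ∈ supported K K S) {k : ℤ} (hk : k ∈ S) :
    k - 1 ∈ S ∧ (a k ≠ 0 → k + 1 ∈ S) := by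
  have hTk := (mem_supported' K _).mp (hS _ (single_mem_supported K 1 hk))
  refine ⟨by_contra fun hk' => ?_, fun ha => by_contra fun hk' => ha ?_⟩
  · simpa [hT, single_apply, show k + 1 ≠ k - 1 by omega] using hTk (k - 1) hk'
  · simpa [hT, single_apply, show k - 1 ≠ k + 1 by omega] using hTk (k + 1) hk'

theorem Int.exists_eq_Iic_of_sub_one_mem {S : Set ℤ} (hS : ∀ k ∈ S, k - 1 ∈ S)
    (hne : S.Nonempty) (huniv : S ≠ Set.univ) : ∃ N, S = Set.Iic N := by
  have hlower : ∀ k ∈ S, ∀ j ≤ k, j ∈ S := fun k hk j hj => by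
    induction j, hj using Int.leInductionDown with
    | base => exact hk
    | pred j _ ih => exact hS j ih
  obtain ⟨b, hb⟩ := (Set.ne_univ_iff_exists_notMem S).mp huniv
  have hbdd : ∀ k ∈ S, k ≤ b := fun k hk => by
    by_contra hkb
    exact hb (hlower k hk b (le_of_not_ge hkb))
  obtain ⟨N, hN, hmax⟩ := Int.exists_greatest_of_bdd ⟨b, hbdd⟩ hne
  exact ⟨N, Set.ext fun k => ⟨hmax k, hlower N hN k⟩⟩

theorem Fin.natCast_le_encard_add_one_of_mapsTo_Ioo {α : Type*} {n : ℕ} {U : Fin (n + 1) → α}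
    (hU : Function.Injective U) {P : Set α} (hP : Set.MapsTo U (Set.Ioo 0 (Fin.last n)) P) :
    (n : ℕ∞) ≤ P.encard + 1 :=
  calc (n : ℕ∞) ≤ ((n - 1 : ℕ) : ℕ∞) + 1 := by norm_cast; omega
    _ = (Set.Ioo 0 (Fin.last n)).encard + 1 := by
      rw [← Finset.coe_Ioo, Set.encard_coe_eq_coe_finsetCard, Fin.card_Ioo]
      simp
    _ ≤ P.encard + 1 := by
      gcongr
      exact Set.encard_le_encard_of_injOn hP hU.injOn

section QArithmetic

variable {h m₀ : ℂ}

theorem qpow_add_qpow_neg_ne_zero (hm : ∀ k : ℤ, qpow h (2 * m₀ + k) ≠ -1) (k : ℤ) :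
    qpow h (m₀ + k) + qpow h (-(m₀ + k)) ≠ 0 := by
  intro h0
  apply hm (2 * k)
  rw [qpow, qpow, mul_neg, exp_neg] at h0
  rw [qpow, show h * (2 * m₀ + ((2 * k : ℤ) : ℂ)) = h * (m₀ + k) + h * (m₀ + k) by push_cast; ring,
    exp_add]
  have hx := exp_ne_zero (h * (m₀ + k))
  field_simp at h0
  linear_combination h0

theorem qnum_eq_zero_or_qnum_eq_zero_of_gtA_eq_zero (hm : ∀ k : ℤ, qpow h (2 * m₀ + k) ≠ -1)
    {ℓ : ℂ} {k : ℤ} (hk : gtA h ℓ m₀ k = 0) :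
    qnum h (ℓ + m₀ + k + 1) = 0 ∨ qnum h (ℓ - m₀ - k) = 0 := by
  have h₁ := qpow_add_qpow_neg_ne_zero hm k
  have h₂ := qpow_add_qpow_neg_ne_zero hm (k + 1)
  rw [Int.cast_add, Int.cast_one, ← add_assoc] at h₂
  simpa only [gtA, div_eq_zero_iff, mul_eq_zero, h₁, h₂, or_false] using hk

variable (hh : ∀ r : ℚ, h ≠ 2 * Real.pi * Complex.I * r)
include hh

theorem int_eq_zero_of_exp_mul_eq_one {m : ℤ} (hexp : exp (h * m) = 1) : m = 0 := by
  by_contra hm0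
  obtain ⟨n, hn⟩ := exp_eq_one_iff.mp hexp
  apply hh ((n : ℚ) / (m : ℚ))
  have hmc : (m : ℂ) ≠ 0 := Int.cast_ne_zero.mpr hm0
  push_cast
  field_simp
  linear_combination hn

theorem exp_sub_exp_neg_ne_zero : exp h - exp (-h) ≠ 0 := by
  intro h0
  have h2 : exp (h * (2 : ℤ)) = 1 := by
    rw [show h * (2 : ℤ) = h - -h by push_cast; ring, exp_sub, sub_eq_zero.mp h0,
      div_self (exp_ne_zero _)]
  exact two_ne_zero (int_eq_zero_of_exp_mul_eq_one hh h2)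

theorem exp_two_mul_eq_one_of_qnum_eq_zero {b : ℂ} (hb : qnum h b = 0) :
    exp (h * (2 * b)) = 1 := by
  rw [qnum, div_eq_zero_iff, or_iff_left (exp_sub_exp_neg_ne_zero hh), sub_eq_zero] at hb
  rw [show h * (2 * b) = h * b - -(h * b) by ring, exp_sub, hb, div_self (exp_ne_zero _)]

theorem int_eq_zero_of_qnum_eq_zero {b₁ b₂ : ℂ} {m : ℤ} (h₁ : qnum h b₁ = 0)
    (h₂ : qnum h b₂ = 0) (hb : b₁ - b₂ = m) : m = 0 := by
  have h2m : exp (h * ((2 * m : ℤ) : ℂ)) = 1 := by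
    rw [show h * ((2 * m : ℤ) : ℂ) = h * (2 * b₁) - h * (2 * b₂) by push_cast; rw [← hb]; ring,
      exp_sub, exp_two_mul_eq_one_of_qnum_eq_zero hh h₁, exp_two_mul_eq_one_of_qnum_eq_zero hh h₂,
      div_one]
  simpa using int_eq_zero_of_exp_mul_eq_one hh h2m

theorem qnum_add_intCast_injective (hm : ∀ k : ℤ, qpow h (2 * m₀ + k) ≠ -1) :
    Function.Injective fun k : ℤ => qnum h (m₀ + k) := by
  intro k j hkj
  set x := exp (h * (m₀ + k))
  set y := exp (h * (m₀ + j))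
  have hx : x ≠ 0 := exp_ne_zero _
  have hy : y ≠ 0 := exp_ne_zero _
  have hxy : x - x⁻¹ = y - y⁻¹ := by
    have hq : qnum h (m₀ + k) = qnum h (m₀ + j) := hkj
    rwa [qnum, qnum, div_left_inj' (exp_sub_exp_neg_ne_zero hh), exp_neg, exp_neg] at hq
  have hprod : x * y ≠ -1 := by
    simpa only [qpow, ← exp_add, x, y, Int.cast_add, mul_add, add_assoc, two_mul, add_left_comm]
      using hm (k + j)
  have hxy' : x = y := by
    have hfac : (x - y) * (x * y + 1) = 0 := by
      field_simp at hxy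
      linear_combination hxy
    exact sub_eq_zero.mp ((mul_eq_zero.mp hfac).resolve_right fun h0 =>
      hprod (eq_neg_of_add_eq_zero_left h0))
  have hdiff : exp (h * ((k - j : ℤ) : ℂ)) = 1 := by
    rw [show h * ((k - j : ℤ) : ℂ) = h * (m₀ + k) - h * (m₀ + j) by push_cast; ring, exp_sub]
    exact (div_eq_one_iff_eq hy).mpr hxy'
  exact sub_eq_zero.mp (int_eq_zero_of_exp_mul_eq_one hh hdiff)

theorem encard_setOf_gtA_eq_zero_le_two (hm : ∀ k : ℤ, qpow h (2 * m₀ + k) ≠ -1) (ℓ : ℂ) :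
    {k : ℤ | gtA h ℓ m₀ k = 0}.encard ≤ 2 := by
  have hsub : {k : ℤ | gtA h ℓ m₀ k = 0} ⊆
      {k : ℤ | qnum h (ℓ + m₀ + k + 1) = 0} ∪ {k : ℤ | qnum h (ℓ - m₀ - k) = 0} :=
    fun k hk => qnum_eq_zero_or_qnum_eq_zero_of_gtA_eq_zero hm hk
  have h₁ : {k : ℤ | qnum h (ℓ + m₀ + k + 1) = 0}.encard ≤ 1 :=
    Set.encard_le_one_iff.mpr fun a b ha hb => by
      have := int_eq_zero_of_qnum_eq_zero hh (m := b - a) hb ha (by push_cast; ring)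
      omega
  have h₂ : {k : ℤ | qnum h (ℓ - m₀ - k) = 0}.encard ≤ 1 :=
    Set.encard_le_one_iff.mpr fun a b ha hb => by
      have := int_eq_zero_of_qnum_eq_zero hh (m := b - a) ha hb (by push_cast; ring)
      omega
  calc _ ≤ _ := Set.encard_le_encard hsub
    _ ≤ _ := Set.encard_union_le _ _
    _ ≤ 1 + 1 := add_le_add h₁ h₂
    _ = 2 := one_add_one_eq_two

end QArithmetic

section GelfandTsetlin

variable {h ℓ m₀ : ℂ} (hh : ∀ r : ℚ, h ≠ 2 * Real.pi * Complex.I * r)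
  (hm : ∀ k : ℤ, qpow h (2 * m₀ + k) ≠ -1) {I21 I32 : Module.End ℂ (ℤ →₀ ℂ)}
  (hI21 : ∀ k : ℤ, I21 (single k 1) = (Complex.I * qnum h (m₀ + k)) • single k 1)
  (hI32 : ∀ k : ℤ, I32 (single k 1) = gtA h ℓ m₀ k • single (k + 1) 1 - single (k - 1) 1)
include hh hm hI21 hI32

theorem exists_gtA_eq_zero_and_eq_supported_Iic {W : Submodule ℂ (ℤ →₀ ℂ)}
    (h21 : ∀ v ∈ W, I21 v ∈ W) (h32 : ∀ v ∈ W, I32 v ∈ W) (hbot : W ≠ ⊥) (htop : W ≠ ⊤) :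
    ∃ N, gtA h ℓ m₀ N = 0 ∧ W = supported ℂ ℂ (Set.Iic N) := by
  have hμ : Function.Injective fun k : ℤ => Complex.I * qnum h (m₀ + k) :=
    (mul_right_injective₀ I_ne_zero).comp (qnum_add_intCast_injective hh hm)
  obtain ⟨S, rfl⟩ : ∃ S, W = supported ℂ ℂ S :=
    ⟨_, eq_supported_of_diagonal (μ := fun k : ℤ => Complex.I * qnum h (m₀ + k)) hμ hI21 h21⟩
  have hladder {k : ℤ} (hk : k ∈ S) := sub_one_mem_and_add_one_mem_of_ladder hI32 h32 hk
  have hne : S.Nonempty :=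
    Set.nonempty_iff_ne_empty.mpr fun hS => hbot (by rw [hS, supported_empty])
  have huniv : S ≠ Set.univ := fun hS => htop (by rw [hS, supported_univ])
  obtain ⟨N, rfl⟩ := Int.exists_eq_Iic_of_sub_one_mem (fun k hk => (hladder hk).1) hne huniv
  refine ⟨N, by_contra fun ha => ?_, rfl⟩
  exact (lt_add_one N).not_ge ((hladder Set.self_mem_Iic).2 ha)

theorem encard_setOf_invariant_ne_bot_ne_top_le_two :
    {W : Submodule ℂ (ℤ →₀ ℂ) |
      (∀ v ∈ W, I21 v ∈ W) ∧ (∀ v ∈ W, I32 v ∈ W) ∧ W ≠ ⊥ ∧ W ≠ ⊤}.encard ≤ 2 :=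
  calc _ ≤ ((fun N : ℤ => supported ℂ ℂ (Set.Iic N)) '' {N | gtA h ℓ m₀ N = 0}).encard := by
        refine Set.encard_le_encard ?_
        rintro W ⟨h21, h32, hbot, htop⟩
        obtain ⟨N, hN, rfl⟩ :=
          exists_gtA_eq_zero_and_eq_supported_Iic hh hm hI21 hI32 h21 h32 hbot htop
        exact ⟨N, hN, rfl⟩
    _ ≤ {N | gtA h ℓ m₀ N = 0}.encard := Set.encard_image_le _ _
    _ ≤ 2 := encard_setOf_gtA_eq_zero_le_two hh hm ℓ

end GelfandTsetlin

theorem stmt_10 (h : ℂ) (hh : ∀ r : ℚ, h ≠ 2 * Real.pi * Complex.I * r)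
    (ℓ m₀ : ℂ) (hm : ∀ k : ℤ, qpow h (2 * m₀ + k) ≠ -1)
    (I21 I32 : Module.End ℂ (ℤ →₀ ℂ))
    (hI21 : ∀ k : ℤ, I21 (Finsupp.single k 1) =
      (Complex.I * qnum h (m₀ + k)) • Finsupp.single k 1)
    (hI32 : ∀ k : ℤ, I32 (Finsupp.single k 1) =
      gtA h ℓ m₀ k • Finsupp.single (k + 1) 1 - Finsupp.single (k - 1) 1)
    (n : ℕ) (U : Fin (n + 1) → Submodule ℂ (ℤ →₀ ℂ))
    (hinv21 : ∀ i, ∀ v ∈ U i, I21 v ∈ U i)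
    (hinv32 : ∀ i, ∀ v ∈ U i, I32 v ∈ U i)
    (hmono : StrictMono U) (hbot : U 0 = ⊥) (htop : U (Fin.last n) = ⊤) :
    n ≤ 3 := by
  have hchain := Fin.natCast_le_encard_add_one_of_mapsTo_Ioo hmono.injective
    (P := {W | (∀ v ∈ W, I21 v ∈ W) ∧ (∀ v ∈ W, I32 v ∈ W) ∧ W ≠ ⊥ ∧ W ≠ ⊤})
    fun i hi => ⟨hinv21 i, hinv32 i, ne_bot_of_gt (hbot ▸ hmono hi.1), htop ▸ (hmono hi.2).ne_top⟩
  have hn : (n : ℕ∞) ≤ 2 + 1 :=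
    hchain.trans (add_le_add_left (encard_setOf_invariant_ne_bot_ne_top_le_two hh hm hI21 hI32) 1)
  exact_mod_cast hn
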